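/- Every partial orientation of a connected multigraph is equivalent via directed cycle reversals and directed cut reversals to a unique partial orientation that is simultaneously cycle minimal and cut minimal (with respect to a fixed pair (<, A)). -/

import Mathlib

open Classical

noncomputable section

/-- A finite multigraph, given by a finite vertex type, a finite edge type, and
two endpoint maps (which also provide a built-in reference direction for each edge). -/
structure Multigraph where
  V : Type
  E : Type
  [fintypeV : Fintype V]
  [fintypeE : Fintype E]
  fst : E → V
  snd : E → V

attribute [instance] Multigraph.fintypeV Multigraph.fintypeE

namespace Multigraph

variable (G : Multigraph)

/-- Adjacency between vertices using only edges in `S`. -/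
def adjOn (S : Set G.E) (u v : G.V) : Prop :=
  ∃ e ∈ S, (G.fst e = u ∧ G.snd e = v) ∨ (G.fst e = v ∧ G.snd e = u)

/-- Reachability (in the undirected sense) using only edges in `S`. -/
def reachOn (S : Set G.E) : G.V → G.V → Prop :=
  Relation.ReflTransGen (G.adjOn S)

def Connected : Prop := ∀ u v : G.V, G.reachOn Set.univ u v

def IsLoop (e : G.E) : Prop := G.fst e = G.snd e

def IsBridge (e : G.E) : Prop := ¬ G.reachOn {f | f ≠ e} (G.fst e) (G.snd e)

/-- Number of connected components of the spanning subgraph with edge set `S`. -/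
def comps (S : Set G.E) : ℕ := Nat.card (Quot (G.reachOn S))

/-- Rank of an edge set: `|V|` minus the number of components it spans. -/
def rk (S : Set G.E) : ℕ := Fintype.card G.V - G.comps S

/-- The Tutte polynomial, via the corank-nullity (subgraph) expansion. -/
def tutte (x y : ℚ) : ℚ :=
  ∑ S : Finset G.E,
    (x - 1) ^ (G.rk Set.univ - G.rk (↑S : Set G.E)) * (y - 1) ^ (S.card - G.rk (↑S : Set G.E))

/-- The genus (cycle rank) `|E| - |V| + 1` of a connected multigraph. -/
def genus : ℕ := Fintype.card G.E + 1 - Fintype.card G.V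

/-- A partial orientation: each edge is unoriented (`none`), oriented in the reference
direction `fst → snd` (`some true`), or oriented oppositely (`some false`). -/
abbrev PartialOrientation := G.E → Option Bool

/-- The tail of edge `e` traversed in direction `b` (`true` = `fst → snd`). -/
def dtail (e : G.E) (b : Bool) : G.V := if b then G.fst e else G.snd e

/-- The head of edge `e` traversed in direction `b` (`true` = `fst → snd`). -/
def dhead (e : G.E) (b : Bool) : G.V := if b then G.snd e else G.fst e

/-- Directed adjacency under a partial orientation. -/
def dAdj (O : G.PartialOrientation) (u v : G.V) : Prop :=
  ∃ e b, O e = some b ∧ G.dtail e b = u ∧ G.dhead e b = v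

/-- Directed reachability under a partial orientation. -/
def dReach (O : G.PartialOrientation) : G.V → G.V → Prop :=
  Relation.ReflTransGen (G.dAdj O)

/-- A partial orientation is acyclic iff it contains no directed cycle, equivalently there
is no oriented edge together with a directed path from its head back to its tail. -/
def Acyclic (O : G.PartialOrientation) : Prop :=
  ¬ ∃ e b, O e = some b ∧ G.dReach O (G.dhead e b) (G.dtail e b)

/-- `e` crosses the cut determined by the vertex set `X`. -/
def crosses (X : Set G.V) (e : G.E) : Prop := ¬ ((G.fst e ∈ X) ↔ (G.snd e ∈ X))

/-- `(X, Xᶜ)` is a directed cut of `O`: the cut is nonempty and every crossing edge is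
oriented from `X` to `Xᶜ`. -/
def IsDirCut (O : G.PartialOrientation) (X : Set G.V) : Prop :=
  (∃ e, G.crosses X e) ∧
  ∀ e, G.crosses X e →
    (G.fst e ∈ X → O e = some true) ∧ (G.snd e ∈ X → O e = some false)

/-- A partial orientation is strongly connected iff it contains no directed cut. -/
def StronglyConnected (O : G.PartialOrientation) : Prop :=
  ¬ ∃ X, G.IsDirCut O X

/-- A directed cycle of `O`: a nonempty cyclically chained list of oriented steps using
pairwise distinct edges, each oriented in `O` as traversed. -/
def IsDCycle (O : G.PartialOrientation) (c : List (G.E × Bool)) : Prop :=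
  c ≠ [] ∧ (∀ s ∈ c, O s.1 = some s.2) ∧
  List.Chain' (fun s t => G.dhead s.1 s.2 = G.dtail t.1 t.2) (c ++ c.take 1) ∧
  (c.map Prod.fst).Nodup

/-- A half-open path: a directed path (all steps but the last oriented in `O`) followed by
an unoriented edge, imagined with the direction that would extend the path. -/
def IsHalfOpenPath (O : G.PartialOrientation) (p : List (G.E × Bool)) : Prop :=
  2 ≤ p.length ∧
  List.Chain' (fun s t => G.dhead s.1 s.2 = G.dtail t.1 t.2) p ∧
  (p.map Prod.fst).Nodup ∧
  (∀ s ∈ p.dropLast, O s.1 = some s.2) ∧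
  ∀ h : p ≠ [], O (p.getLast h).1 = none

/-- `O'` is obtained from `O` by reversing one directed cut. -/
def cutRev (O O' : G.PartialOrientation) : Prop :=
  ∃ X, G.IsDirCut O X ∧ (∀ e, ¬ G.crosses X e → O' e = O e) ∧
    (∀ e, G.crosses X e → O' e = (O e).map not)

/-- `O'` is obtained from `O` by reversing one directed cycle. -/
def cycleRev (O O' : G.PartialOrientation) : Prop :=
  ∃ c, G.IsDCycle O c ∧ (∀ e, e ∉ c.map Prod.fst → O' e = O e) ∧
    (∀ s ∈ c, O' s.1 = some (!s.2))

/-- `O'` is obtained from `O` by a Jacob's ladder cascade along a half-open path: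
the first edge becomes unoriented and all other edges get the reversed direction. -/
def cascade (O O' : G.PartialOrientation) : Prop :=
  ∃ p, G.IsHalfOpenPath O p ∧ (∀ e, e ∉ p.map Prod.fst → O' e = O e) ∧
    (∀ h : p ≠ [], O' (p.head h).1 = none) ∧
    (∀ s ∈ p.tail, O' s.1 = some (!s.2))

/-- An edge pivot at a vertex `v`: unorient an edge `e'` oriented into `v` and orient a
previously unoriented edge `e` toward `v`. -/
def pivot (O O' : G.PartialOrientation) : Prop :=
  ∃ e e' b b', e ≠ e' ∧ O e = none ∧ O e' = some b' ∧
    G.dhead e b = G.dhead e' b' ∧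
    O' e = some b ∧ O' e' = none ∧ ∀ f, f ≠ e → f ≠ e' → O' f = O f

/-- A directed cut of `O` is minimal w.r.t. `(<, A)` if its `<`-minimum crossing edge is
oriented as in the reference orientation `A`. -/
def MinimalCut [LinearOrder G.E] (A : G.E → Bool) (O : G.PartialOrientation)
    (X : Set G.V) : Prop :=
  ∃ e, G.crosses X e ∧ (∀ e', G.crosses X e' → e ≤ e') ∧ O e = some (A e)

/-- A partial orientation is cut minimal if every directed cut in it is minimal. -/
def CutMinimal [LinearOrder G.E] (A : G.E → Bool) (O : G.PartialOrientation) : Prop :=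
  ∀ X, G.IsDirCut O X → G.MinimalCut A O X

/-- A list of steps is minimal w.r.t. `(<, A)` if its `<`-minimum edge is traversed in the
direction given by the reference orientation `A`. -/
def MinimalSteps [LinearOrder G.E] (A : G.E → Bool) (c : List (G.E × Bool)) : Prop :=
  ∃ s ∈ c, (∀ t ∈ c, s.1 ≤ t.1) ∧ s.2 = A s.1

/-- A partial orientation is cycle minimal if every directed cycle in it is minimal. -/
def CycleMinimal [LinearOrder G.E] (A : G.E → Bool) (O : G.PartialOrientation) : Prop :=
  ∀ c, G.IsDCycle O c → G.MinimalSteps A c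

/-- A partial orientation is cycle-path minimal if every directed cycle and every
half-open path in it is minimal. -/
def CyclePathMinimal [LinearOrder G.E] (A : G.E → Bool) (O : G.PartialOrientation) : Prop :=
  G.CycleMinimal A O ∧ ∀ p, G.IsHalfOpenPath O p → G.MinimalSteps A p

/-- The indegree of a vertex: the number of edges oriented toward it. -/
def indeg (O : G.PartialOrientation) (v : G.V) : ℕ :=
  Nat.card {e : G.E // ∃ b, O e = some b ∧ G.dhead e b = v}

/-- Orient the (previously unoriented) edge `e` in direction `b`. -/
def orient (O : G.PartialOrientation) (e : G.E) (b : Bool) : G.PartialOrientation :=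
  fun f => if f = e then some b else O f

/-- Deletion of the edge `e`. -/
def deleteEdge (e : G.E) : Multigraph where
  V := G.V
  E := {f : G.E // f ≠ e}
  fintypeE := Subtype.fintype _
  fst := fun f => G.fst f.1
  snd := fun f => G.snd f.1

/-- Contraction of the edge `e`: identify its two endpoints and remove `e`. -/
def contractEdge (e : G.E) : Multigraph where
  V := Quot (fun a b => a = G.fst e ∧ b = G.snd e)
  E := {f : G.E // f ≠ e}
  fintypeV := Fintype.ofSurjective (Quot.mk _) (Quot.mk_surjective)
  fintypeE := Subtype.fintype _
  fst := fun f => Quot.mk _ (G.fst f.1)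
  snd := fun f => Quot.mk _ (G.snd f.1)

/-- The number of acyclic partial orientations of `G`. -/
def numAcyclic : ℕ := Nat.card {O : G.PartialOrientation // G.Acyclic O}

/-- The number of strongly connected partial orientations of `G`. -/
def numStrong : ℕ := Nat.card {O : G.PartialOrientation // G.StronglyConnected O}

end Multigraph

/-!
Encode a partial orientation `O` by its signed chain `χ_O = G.chain O : E → ℤ` (`±1` on oriented
edges, `0` on unoriented ones). Reversing a directed cycle, resp. a directed cut, of `O` replaces
`χ_O` by `χ_O - 2 g`, where `g` is a circulation, resp. a coboundary, *conformal* to `O`: it agrees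
with `χ_O` wherever it is nonzero. A conformal circulation `f` and a conformal coboundary `δφ` are
orthogonal and `f e * δφ e ≥ 0` for every edge, so their supports are disjoint. This makes
"`χ_O' = χ_O - 2 (f + δφ)` with `f`, `δφ` conformal to `O`" (`Reversal`) an equivalence relation,
which therefore relates the two ends of every sequence of reversals.

If two such related orientations differ, then either `f ≠ 0`, and following the support of `f`
gives a directed cycle of `O` that is reversed in `O'`, or `δφ ≠ 0`, and a sublevel set of `φ` is
a directed cut of `O` that is reversed in `O'`. The minimum edge of that cycle or cut cannot agree
with `A` in both orientations, which gives uniqueness. For existence, reversing a non-minimal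
directed cycle or cut fixes its minimum edge and changes only larger ones, so the edges disagreeing
with `A` decrease lexicographically.
-/

theorem List.sum_map_sub_of_isChain {α M : Type*} [AddCommGroup M] {u v : α → M} :
    ∀ {a : α} {l : List α}, (a :: l).IsChain (fun s t => u s = v t) →
      ((a :: l).map fun s => u s - v s).sum = u ((a :: l).getLast (List.cons_ne_nil a l)) - v a
  | _, [], _ => by simp
  | a, b :: l, h => by
    rw [List.isChain_cons_cons] at h
    rw [List.map_cons, List.sum_cons, List.sum_map_sub_of_isChain h.2, List.getLast_cons_cons, h.1]
    abel

theorem List.sum_map_sub_eq_zero_of_isChain_append_take {α M : Type*} [AddCommGroup M]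
    {u v : α → M} {l : List α} (h : (l ++ l.take 1).IsChain (fun s t => u s = v t)) :
    (l.map fun s => u s - v s).sum = 0 := by
  cases l with
  | nil => simp
  | cons a l =>
    have := List.sum_map_sub_of_isChain (u := u) (v := v) (l := l ++ [a]) (by simpa using h)
    simp only [← List.cons_append, List.map_append, List.sum_append, List.getLast_append_singleton,
      List.map_singleton, List.sum_singleton] at this
    simpa using this

theorem Function.exists_nodup_cyclic_chain {α : Type*} [Finite α] [Nonempty α] (σ : α → α) :
    ∃ l : List α, l ≠ [] ∧ l.Nodup ∧ (l ++ l.take 1).IsChain (fun a b => σ a = b) := by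
  obtain ⟨x⟩ := ‹Nonempty α›
  obtain ⟨i, j, hij, heq⟩ := Finite.exists_ne_map_eq_of_infinite fun n : ℕ => σ^[n] x
  wlog hlt : i < j generalizing i j
  · exact this j i hij.symm heq.symm (by omega)
  have hy : σ^[i] x ∈ periodicPts σ := by
    refine mk_mem_periodicPts (Nat.sub_pos_of_lt hlt) ?_
    show σ^[j - i] (σ^[i] x) = σ^[i] x
    rw [← iterate_add_apply, Nat.sub_add_cancel hlt.le]
    exact heq.symm
  set y := σ^[i] x
  set n := minimalPeriod σ y
  have hn : 0 < n := minimalPeriod_pos_of_mem_periodicPts hy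
  have hclose : (List.range n).map (σ^[·] y) ++ ((List.range n).map (σ^[·] y)).take 1 =
      (List.range (n + 1)).map (σ^[·] y) := by
    obtain ⟨k, hk⟩ := Nat.exists_eq_add_of_lt hn
    rw [List.range_succ, List.map_append, List.map_singleton, iterate_minimalPeriod, hk]
    simp [List.range_succ_eq_map]
  refine ⟨_, by simpa using hn.ne', Cycle.nodup_coe_iff.mp nodup_periodicOrbit, ?_⟩
  rw [hclose, List.isChain_map, List.isChain_range_succ]
  exact fun m _ => (iterate_succ_apply' σ m y).symm

namespace Multigraph

def dirSign : Option Bool → ℤ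
  | none => 0
  | some true => 1
  | some false => -1

lemma dirSign_injective : Function.Injective dirSign := by
  intro o o' h
  rcases o with _ | _ | _ <;> rcases o' with _ | _ | _ <;> simp_all [dirSign]

lemma dirSign_map_not (o : Option Bool) : dirSign (o.map not) = -dirSign o := by
  rcases o with _ | _ | _ <;> rfl

lemma dirSign_eq_neg_iff {o o' : Option Bool} : dirSign o' = -dirSign o ↔ o' = o.map not := by
  rw [← dirSign_map_not, dirSign_injective.eq_iff]

variable (G : Multigraph)

def chain (O : G.PartialOrientation) (e : G.E) : ℤ := dirSign (O e)

def coboundary (φ : G.V → ℤ) (e : G.E) : ℤ := φ (G.snd e) - φ (G.fst e)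

/-- Kirchhoff's current law, in dual form. -/
def IsCirculation (f : G.E → ℤ) : Prop := ∀ φ : G.V → ℤ, ∑ e, f e * G.coboundary φ e = 0

def Conformal (O : G.PartialOrientation) (f : G.E → ℤ) : Prop := ∀ e, f e ≠ 0 → f e = G.chain O e

def chainOn (O : G.PartialOrientation) (S : Set G.E) (e : G.E) : ℤ :=
  if e ∈ S then G.chain O e else 0

def reverseOn (O : G.PartialOrientation) (S : Set G.E) : G.PartialOrientation :=
  fun e => if e ∈ S then (O e).map not else O e

variable {G} {O O' : G.PartialOrientation}

@[simp] lemma dhead_not (e : G.E) (b : Bool) : G.dhead e (!b) = G.dtail e b := by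
  cases b <;> rfl

@[simp] lemma dtail_not (e : G.E) (b : Bool) : G.dtail e (!b) = G.dhead e b := by
  cases b <;> rfl

lemma chain_mul_coboundary {e : G.E} {b : Bool} (h : O e = some b) (φ : G.V → ℤ) :
    G.chain O e * G.coboundary φ e = φ (G.dhead e b) - φ (G.dtail e b) := by
  cases b <;> simp [chain, coboundary, dirSign, h, dhead, dtail]

lemma coboundary_add (φ ψ : G.V → ℤ) : G.coboundary (φ + ψ) = G.coboundary φ + G.coboundary ψ := by
  ext e; simp only [coboundary, Pi.add_apply]; ring

lemma coboundary_neg (φ : G.V → ℤ) : G.coboundary (-φ) = -G.coboundary φ := by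
  ext e; simp only [coboundary, Pi.neg_apply]; ring

lemma chain_eq_sub_chainOn {S : Set G.E} (hS : ∀ e ∈ S, O' e = (O e).map not)
    (hSc : ∀ e ∉ S, O' e = O e) (e : G.E) :
    G.chain O' e = G.chain O e - 2 * G.chainOn O S e := by
  by_cases he : e ∈ S
  · simp only [chain, chainOn, if_pos he, hS e he, dirSign_map_not]; ring
  · simp [chain, chainOn, he, hSc e he]

lemma conformal_chainOn (S : Set G.E) : G.Conformal O (G.chainOn O S) := by
  intro e he
  unfold chainOn at he ⊢
  split_ifs at he ⊢ <;> simp_all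

lemma Conformal.exists_eq_some {f : G.E → ℤ} (hf : G.Conformal O f) {e : G.E} (he : f e ≠ 0) :
    ∃ b, O e = some b := by
  have := hf e he
  cases h : O e with
  | none => simp [chain, dirSign, h, he] at this
  | some b => exact ⟨b, rfl⟩

lemma isCirculation_zero : G.IsCirculation 0 := fun φ => by simp

lemma IsCirculation.add {f g : G.E → ℤ} (hf : G.IsCirculation f) (hg : G.IsCirculation g) :
    G.IsCirculation (f + g) := fun φ => by
  simp only [Pi.add_apply, add_mul, Finset.sum_add_distrib, hf φ, hg φ, add_zero]

lemma IsCirculation.neg {f : G.E → ℤ} (hf : G.IsCirculation f) : G.IsCirculation (-f) :=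
  fun φ => by simp only [Pi.neg_apply, neg_mul, Finset.sum_neg_distrib, hf φ, neg_zero]

lemma IsCirculation.eq_zero_or_eq_zero_of_conformal {f : G.E → ℤ} {φ : G.V → ℤ}
    (hf : G.IsCirculation f) (hfO : G.Conformal O f) (hφO : G.Conformal O (G.coboundary φ))
    (e : G.E) : f e = 0 ∨ G.coboundary φ e = 0 := by
  have hnonneg : ∀ e ∈ Finset.univ, 0 ≤ f e * G.coboundary φ e := by
    intro e _
    by_cases h₁ : f e = 0
    · simp [h₁]
    by_cases h₂ : G.coboundary φ e = 0
    · simp [h₂]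
    rw [hfO e h₁, hφO e h₂]
    exact mul_self_nonneg _
  exact mul_eq_zero.mp ((Finset.sum_eq_zero_iff_of_nonneg hnonneg).mp (hf φ) e (Finset.mem_univ e))

lemma Conformal.neg_of_reverse {g : G.E → ℤ} (hg : G.Conformal O g)
    (hO' : ∀ e, g e ≠ 0 → G.chain O' e = G.chain O e - 2 * g e) : G.Conformal O' (-g) := by
  intro e he
  have hge : g e ≠ 0 := by simpa using he
  rw [Pi.neg_apply, hO' e hge, ← hg e hge]
  ring

lemma Conformal.add_of_reverse {h k : G.E → ℤ} (hh : G.Conformal O h) (hk : G.Conformal O' k)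
    (hO' : ∀ e, k e ≠ 0 → G.chain O' e = G.chain O e - 2 * h e) : G.Conformal O (h + k) := by
  intro e he
  rw [Pi.add_apply] at he ⊢
  by_cases hke : k e = 0
  · rw [hke, add_zero] at he ⊢
    exact hh e he
  rw [hk e hke, hO' e hke] at he ⊢
  by_cases hhe : h e = 0
  · rw [hhe]; ring
  · rw [hh e hhe] at he; exact absurd (by ring) he

lemma IsDCycle.isCirculation {c : List (G.E × Bool)} (hc : G.IsDCycle O c) :
    G.IsCirculation (G.chainOn O {e | e ∈ c.map Prod.fst}) := by
  intro φ
  obtain ⟨-, hO, hchain, hnodup⟩ := hc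
  calc ∑ e, G.chainOn O {e | e ∈ c.map Prod.fst} e * G.coboundary φ e
      = ∑ e ∈ (c.map Prod.fst).toFinset, G.chain O e * G.coboundary φ e := by
        simp only [chainOn, Set.mem_ofPred_eq, ite_mul, zero_mul]
        rw [← Finset.sum_filter]
        congr 1
        ext e
        simp
    _ = (c.map fun s => φ (G.dhead s.1 s.2) - φ (G.dtail s.1 s.2)).sum := by
        rw [List.sum_toFinset _ hnodup, List.map_map]
        exact congrArg _ (List.map_congr_left fun s hs => chain_mul_coboundary (hO s hs) φ)
    _ = 0 :=
        List.sum_map_sub_eq_zero_of_isChain_append_take (hchain.imp fun _ _ h => congrArg φ h)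

lemma IsDirCut.coboundary_eq_chainOn {X : Set G.V} (hX : G.IsDirCut O X) :
    G.coboundary (fun v => if v ∈ X then 0 else 1) = G.chainOn O {e | G.crosses X e} := by
  ext e
  by_cases hcr : G.crosses X e
  · have hcr' := hcr
    unfold crosses at hcr'
    by_cases hfst : G.fst e ∈ X
    · simp [coboundary, chainOn, hcr, hfst, show G.snd e ∉ X by tauto, chain,
        (hX.2 e hcr).1 hfst, dirSign]
    · simp [coboundary, chainOn, hcr, hfst, show G.snd e ∈ X by tauto, chain,
        (hX.2 e hcr).2 (by tauto), dirSign]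
  · have hiff : G.fst e ∈ X ↔ G.snd e ∈ X := not_not.mp hcr
    simp [coboundary, chainOn, hcr, hiff]

lemma IsDirCut.exists_eq_some {X : Set G.V} (hX : G.IsDirCut O X) {e : G.E}
    (he : G.crosses X e) : ∃ b, O e = some b := by
  unfold crosses at he
  by_cases hfst : G.fst e ∈ X
  · exact ⟨true, (hX.2 e he).1 hfst⟩
  · exact ⟨false, (hX.2 e he).2 (by tauto)⟩

lemma cutRev_reverseOn {X : Set G.V} (hX : G.IsDirCut O X) :
    G.cutRev O (G.reverseOn O {e | G.crosses X e}) :=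
  ⟨X, hX, fun _ he => if_neg he, fun _ he => if_pos he⟩

lemma cycleRev_reverseOn {c : List (G.E × Bool)} (hc : G.IsDCycle O c) :
    G.cycleRev O (G.reverseOn O {e | e ∈ c.map Prod.fst}) := by
  refine ⟨c, hc, fun _ he => if_neg he, fun s hs => ?_⟩
  rw [reverseOn, if_pos (show s.1 ∈ {e | e ∈ c.map Prod.fst} from List.mem_map_of_mem hs),
    hc.2.1 s hs]
  rfl

variable (G) in
structure Reversal (O O' : G.PartialOrientation) where
  circ : G.E → ℤ
  pot : G.V → ℤ
  isCirculation : G.IsCirculation circ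
  conformal_circ : G.Conformal O circ
  conformal_coboundary : G.Conformal O (G.coboundary pot)
  chain_eq : ∀ e, G.chain O' e = G.chain O e - 2 * (circ e + G.coboundary pot e)

namespace Reversal

variable {O'' : G.PartialOrientation} (r : G.Reversal O O')

lemma circ_eq_zero_or_coboundary_eq_zero (e : G.E) : r.circ e = 0 ∨ G.coboundary r.pot e = 0 :=
  r.isCirculation.eq_zero_or_eq_zero_of_conformal r.conformal_circ r.conformal_coboundary e

lemma chain_eq_of_circ_ne_zero {e : G.E} (he : r.circ e ≠ 0) :
    G.chain O' e = G.chain O e - 2 * r.circ e := by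
  rw [r.chain_eq, (r.circ_eq_zero_or_coboundary_eq_zero e).resolve_left he, add_zero]

lemma chain_eq_of_coboundary_ne_zero {e : G.E} (he : G.coboundary r.pot e ≠ 0) :
    G.chain O' e = G.chain O e - 2 * G.coboundary r.pot e := by
  rw [r.chain_eq, (r.circ_eq_zero_or_coboundary_eq_zero e).resolve_right he, zero_add]

lemma map_not_of_circ_ne_zero {e : G.E} (he : r.circ e ≠ 0) : O' e = (O e).map not := by
  have := r.chain_eq_of_circ_ne_zero he
  rw [r.conformal_circ e he] at this
  exact dirSign_eq_neg_iff.mp (by simp only [chain] at this; linarith)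

lemma map_not_of_coboundary_ne_zero {e : G.E} (he : G.coboundary r.pot e ≠ 0) :
    O' e = (O e).map not := by
  have := r.chain_eq_of_coboundary_ne_zero he
  rw [r.conformal_coboundary e he] at this
  exact dirSign_eq_neg_iff.mp (by simp only [chain] at this; linarith)

def refl (O : G.PartialOrientation) : G.Reversal O O where
  circ := 0
  pot := 0
  isCirculation := isCirculation_zero
  conformal_circ e he := absurd rfl he
  conformal_coboundary e he := absurd (by simp [coboundary]) he
  chain_eq e := by simp [coboundary]

def symm : G.Reversal O' O where
  circ := -r.circ
  pot := -r.pot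
  isCirculation := r.isCirculation.neg
  conformal_circ := r.conformal_circ.neg_of_reverse fun _ he => r.chain_eq_of_circ_ne_zero he
  conformal_coboundary := by
    rw [coboundary_neg]
    exact r.conformal_coboundary.neg_of_reverse fun _ he => r.chain_eq_of_coboundary_ne_zero he
  chain_eq e := by
    rw [coboundary_neg, r.chain_eq e, Pi.neg_apply, Pi.neg_apply]
    ring

def trans (s : G.Reversal O' O'') : G.Reversal O O'' where
  circ := r.circ + s.circ
  pot := r.pot + s.pot
  isCirculation := r.isCirculation.add s.isCirculation
  conformal_circ := r.conformal_circ.add_of_reverse s.conformal_circ fun e he => by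
    have h := s.isCirculation.eq_zero_or_eq_zero_of_conformal s.conformal_circ
      r.symm.conformal_coboundary e
    have hφ : G.coboundary r.pot e = 0 := by
      simpa [symm, coboundary_neg] using h.resolve_left he
    rw [r.chain_eq e, hφ]
    ring
  conformal_coboundary := by
    rw [coboundary_add]
    refine r.conformal_coboundary.add_of_reverse s.conformal_coboundary fun e he => ?_
    have h := r.symm.isCirculation.eq_zero_or_eq_zero_of_conformal r.symm.conformal_circ
      s.conformal_coboundary e
    rw [r.chain_eq e, show r.circ e = 0 by simpa [symm] using h.resolve_right he]
    ring
  chain_eq e := by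
    rw [s.chain_eq e, r.chain_eq e, coboundary_add]
    simp only [Pi.add_apply]
    ring

lemma nonempty_of_cycleRev (h : G.cycleRev O O') : Nonempty (G.Reversal O O') := by
  obtain ⟨c, hc, hsame, hrev⟩ := h
  refine ⟨⟨_, 0, hc.isCirculation, conformal_chainOn _,
    fun e he => absurd (by simp [coboundary]) he, fun e => ?_⟩⟩
  rw [chain_eq_sub_chainOn (S := {e | e ∈ c.map Prod.fst}) ?_ hsame e]
  · simp [coboundary]
  · intro e he
    obtain ⟨s, hs, rfl⟩ := List.mem_map.mp he
    rw [hrev s hs, hc.2.1 s hs]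
    rfl

lemma nonempty_of_cutRev (h : G.cutRev O O') : Nonempty (G.Reversal O O') := by
  obtain ⟨X, hX, hsame, hrev⟩ := h
  refine ⟨⟨0, fun v => if v ∈ X then 0 else 1, isCirculation_zero, fun e he => absurd rfl he, ?_,
    fun e => ?_⟩⟩
  · rw [hX.coboundary_eq_chainOn]
    exact conformal_chainOn _
  · rw [hX.coboundary_eq_chainOn, chain_eq_sub_chainOn (S := {e | G.crosses X e}) hrev hsame e,
      Pi.zero_apply, zero_add]

lemma nonempty_of_reflTransGen
    (h : Relation.ReflTransGen (fun a b => G.cutRev a b ∨ G.cycleRev a b) O O') :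
    Nonempty (G.Reversal O O') := by
  induction h with
  | refl => exact ⟨refl O⟩
  | tail _ hmove ih =>
    obtain ⟨r⟩ := ih
    obtain ⟨s⟩ := hmove.elim nonempty_of_cutRev nonempty_of_cycleRev
    exact ⟨r.trans s⟩

end Reversal

lemma exists_succ_of_conformal {f : G.E → ℤ} (hf : G.IsCirculation f) (hfO : G.Conformal O f)
    {e : G.E} {b : Bool} (he : f e ≠ 0) (hb : O e = some b) :
    ∃ e' b', f e' ≠ 0 ∧ O e' = some b' ∧ G.dtail e' b' = G.dhead e b := by
  by_contra hno
  push Not at hno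
  -- otherwise the net flow of `f` into `dhead e b` would be positive
  set ψ : G.V → ℤ := fun w => if w = G.dhead e b then 1 else 0
  have hterm : ∀ e' b', f e' ≠ 0 → O e' = some b' →
      f e' * G.coboundary ψ e' = ψ (G.dhead e' b') := by
    intro e' b' he' hb'
    rw [hfO e' he', chain_mul_coboundary hb']
    simp [ψ, hno e' b' he' hb']
  have hnonneg : ∀ e' ∈ Finset.univ, 0 ≤ f e' * G.coboundary ψ e' := by
    intro e' _
    by_cases he' : f e' = 0
    · simp [he']
    obtain ⟨b', hb'⟩ := hfO.exists_eq_some he'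
    rw [hterm e' b' he' hb']
    positivity
  have := Finset.single_le_sum hnonneg (Finset.mem_univ e)
  rw [hterm e b he hb, hf ψ] at this
  simp [ψ] at this

lemma exists_isDCycle_of_conformal {f : G.E → ℤ} (hf : G.IsCirculation f)
    (hfO : G.Conformal O f) {e₀ : G.E} (he₀ : f e₀ ≠ 0) :
    ∃ c, G.IsDCycle O c ∧ ∀ s ∈ c, f s.1 ≠ 0 := by
  let T := {s : G.E × Bool // f s.1 ≠ 0 ∧ O s.1 = some s.2}
  have : Nonempty T := by
    obtain ⟨b, hb⟩ := hfO.exists_eq_some he₀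
    exact ⟨⟨(e₀, b), he₀, hb⟩⟩
  have hsucc : ∀ s : T, ∃ t : T, G.dtail t.1.1 t.1.2 = G.dhead s.1.1 s.1.2 := by
    rintro ⟨s, hs, hO⟩
    obtain ⟨e', b', he', hb', heq⟩ := exists_succ_of_conformal hf hfO hs hO
    exact ⟨⟨(e', b'), he', hb'⟩, heq⟩
  -- a periodic orbit of a successor map on the oriented support is a directed cycle
  choose σ hσ using hsucc
  obtain ⟨l, hne, hnodup, hchain⟩ := Function.exists_nodup_cyclic_chain σ
  refine ⟨l.map Subtype.val, ⟨by simpa using hne, ?_, ?_, ?_⟩, ?_⟩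
  · simp only [List.mem_map]
    rintro _ ⟨s, -, rfl⟩
    exact s.2.2
  · rw [← List.map_take, ← List.map_append, List.Chain', List.isChain_map]
    exact hchain.imp fun s t (h : σ s = t) => h ▸ (hσ s).symm
  · rw [List.map_map]
    refine hnodup.map_on fun s _ t _ hst => Subtype.ext (Prod.ext hst ?_)
    have h := s.2.2
    rw [show s.1.1 = t.1.1 from hst, t.2.2] at h
    exact (Option.some_injective _ h).symm
  · simp only [List.mem_map]
    rintro _ ⟨s, -, rfl⟩
    exact s.2.1

lemma exists_isDirCut_of_conformal {φ : G.V → ℤ} (hφ : G.Conformal O (G.coboundary φ))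
    {e₀ : G.E} (he₀ : G.coboundary φ e₀ ≠ 0) :
    ∃ X, G.IsDirCut O X ∧ G.crosses X e₀ ∧ ∀ e, G.crosses X e → G.coboundary φ e ≠ 0 := by
  have hstep : ∀ e, G.coboundary φ e ≠ 0 →
      (φ (G.snd e) = φ (G.fst e) + 1 ∧ O e = some true) ∨
        (φ (G.fst e) = φ (G.snd e) + 1 ∧ O e = some false) := by
    intro e he
    have := hφ e he
    simp only [coboundary, chain] at he this
    rcases h : O e with _ | _ | _ <;> simp only [h, dirSign] at this <;> simp <;> omega
  set t := max (φ (G.fst e₀)) (φ (G.snd e₀))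
  set X : Set G.V := {v | φ v < t}
  have hsupp : ∀ e, G.crosses X e → G.coboundary φ e ≠ 0 := by
    intro e he h0
    simp only [coboundary, sub_eq_zero] at h0
    exact he (by simp [X, h0])
  have hcross₀ : G.crosses X e₀ := by
    simp only [crosses, X, Set.mem_ofPred_eq, t]
    rcases hstep e₀ he₀ with ⟨h, -⟩ | ⟨h, -⟩ <;> omega
  refine ⟨X, ⟨⟨e₀, hcross₀⟩, fun e he => ?_⟩, hcross₀, hsupp⟩
  have hlt : ∀ v, v ∈ X ↔ φ v < t := fun v => Iff.rfl
  rcases hstep e (hsupp e he) with ⟨h, hO⟩ | ⟨h, hO⟩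
  · refine ⟨fun _ => hO, fun hs => absurd ⟨fun _ => hs, fun _ => ?_⟩ he⟩
    rw [hlt] at hs ⊢
    omega
  · refine ⟨fun hs => absurd ⟨fun _ => ?_, fun _ => hs⟩ he, fun _ => hO⟩
    rw [hlt] at hs ⊢
    omega

lemma IsDCycle.reverse {a : G.E × Bool} {t : List (G.E × Bool)} (hc : G.IsDCycle O (a :: t))
    (hO' : ∀ s ∈ a :: t, O' s.1 = some (!s.2)) :
    G.IsDCycle O' (Prod.map id not a :: (t.map (Prod.map id not)).reverse) := by
  obtain ⟨-, -, hchain, hnodup⟩ := hc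
  refine ⟨List.cons_ne_nil _ _, ?_, ?_, ?_⟩
  · simp only [List.mem_cons, List.mem_reverse, List.mem_map]
    rintro _ (rfl | ⟨s, hs, rfl⟩)
    exacts [hO' a List.mem_cons_self, hO' s (List.mem_cons_of_mem a hs)]
  · have : Prod.map id not a :: (t.map (Prod.map id not)).reverse ++ [Prod.map id not a] =
        ((a :: t ++ [a]).map (Prod.map id not)).reverse := by simp
    rw [List.Chain'] at hchain ⊢
    simp only [List.take_succ_cons, List.take_zero, List.cons_append] at hchain ⊢
    rw [← List.cons_append, this, List.isChain_reverse, List.isChain_map]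
    exact hchain.imp fun s s' h => by simpa using h.symm
  · simpa [List.map_reverse, List.nodup_reverse, Function.comp_def] using hnodup

lemma crosses_compl {X : Set G.V} {e : G.E} : G.crosses Xᶜ e ↔ G.crosses X e := by
  simp only [crosses, Set.mem_compl_iff, not_iff_not]

lemma IsDirCut.compl {X : Set G.V} (hX : G.IsDirCut O X)
    (hrev : ∀ e, G.crosses X e → O' e = (O e).map not) : G.IsDirCut O' Xᶜ := by
  obtain ⟨⟨e₀, he₀⟩, hdir⟩ := hX
  refine ⟨⟨e₀, crosses_compl.mpr he₀⟩, fun e he => ?_⟩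
  rw [crosses_compl] at he
  have he' := he
  unfold crosses at he'
  rw [hrev e he]
  exact ⟨fun h => by rw [(hdir e he).2 (by tauto)]; rfl,
    fun h => by rw [(hdir e he).1 (by tauto)]; rfl⟩

variable (G) in
def disagreement (A : G.E → Bool) (O : G.PartialOrientation) (e : G.E) : Bool :=
  decide (O e = some (!A e))

section Minimality

variable [LinearOrder G.E] {A : G.E → Bool}

lemma MinimalSteps.perm {c c' : List (G.E × Bool)} (h : c.Perm c') (hc : G.MinimalSteps A c) :
    G.MinimalSteps A c' := by
  obtain ⟨s, hs, hmin, hA⟩ := hc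
  exact ⟨s, h.mem_iff.mp hs, fun t ht => hmin t (h.mem_iff.mpr ht), hA⟩

lemma MinimalSteps.not_map_not {c : List (G.E × Bool)} (hO : ∀ s ∈ c, O s.1 = some s.2)
    (hc : G.MinimalSteps A c) : ¬ G.MinimalSteps A (c.map (Prod.map id not)) := by
  obtain ⟨s, hs, hmin, hA⟩ := hc
  rintro ⟨_, hu', hmin', hA'⟩
  obtain ⟨u, hu, rfl⟩ := List.mem_map.mp hu'
  have hsu : s.1 = u.1 :=
    le_antisymm (hmin u hu) (hmin' (Prod.map id not s) (List.mem_map_of_mem hs))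
  have h2 : s.2 = u.2 := Option.some_injective _ ((hO s hs).symm.trans (hsu ▸ hO u hu))
  simp only [Prod.map_fst, Prod.map_snd, id_eq] at hA'
  rw [← hsu, ← hA, h2] at hA'
  exact Bool.not_ne_self _ hA'

lemma MinimalCut.not_compl {X : Set G.V}
    (hrev : ∀ e, G.crosses X e → O' e = (O e).map not) (h : G.MinimalCut A O X) :
    ¬ G.MinimalCut A O' Xᶜ := by
  obtain ⟨m, hm, hmin, hA⟩ := h
  rintro ⟨m', hm', hmin', hA'⟩
  rw [crosses_compl] at hm'
  have : m = m' := le_antisymm (hmin m' hm') (hmin' m (crosses_compl.mpr hm))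
  subst this
  rw [hrev m hm, hA] at hA'
  cases A m <;> simp at hA'

theorem Reversal.eq_of_minimal (r : G.Reversal O O')
    (hO : G.CutMinimal A O ∧ G.CycleMinimal A O)
    (hO' : G.CutMinimal A O' ∧ G.CycleMinimal A O') : O = O' := by
  funext e
  by_contra hne
  have hsum : r.circ e + G.coboundary r.pot e ≠ 0 := by
    intro h0
    have := r.chain_eq e
    rw [h0, mul_zero, sub_zero] at this
    exact hne (dirSign_injective this).symm
  by_cases hf : r.circ e = 0
  · rw [hf, zero_add] at hsum
    obtain ⟨X, hX, -, hsupp⟩ := exists_isDirCut_of_conformal r.conformal_coboundary hsum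
    have hrev : ∀ e, G.crosses X e → O' e = (O e).map not :=
      fun e he => r.map_not_of_coboundary_ne_zero (hsupp e he)
    exact (hO.1 X hX).not_compl hrev (hO'.1 _ (hX.compl hrev))
  · obtain ⟨c, hc, hsupp⟩ := exists_isDCycle_of_conformal r.isCirculation r.conformal_circ hf
    obtain ⟨a, t, rfl⟩ := List.exists_cons_of_ne_nil hc.1
    have hrev : ∀ s ∈ a :: t, O' s.1 = some (!s.2) := fun s hs => by
      rw [r.map_not_of_circ_ne_zero (hsupp s hs), hc.2.1 s hs]
      rfl
    refine (hO.2 _ hc).not_map_not hc.2.1 ((hO'.2 _ (hc.reverse hrev)).perm ?_)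
    rw [List.map_cons]
    exact (List.reverse_perm _).cons _

lemma toLex_disagreement_reverseOn_lt {S : Set G.E} {m : G.E} (hm : m ∈ S)
    (hmin : ∀ e ∈ S, m ≤ e) (hbad : O m = some (!A m)) :
    toLex (G.disagreement A (G.reverseOn O S)) < toLex (G.disagreement A O) := by
  refine ⟨m, fun e he => ?_, ?_⟩
  · have : e ∉ S := fun h => (hmin e h).not_gt he
    simp [disagreement, reverseOn, this]
  · simp [disagreement, reverseOn, hm, hbad]

lemma exists_reversal_lt_of_not_minimal (h : ¬ (G.CutMinimal A O ∧ G.CycleMinimal A O)) :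
    ∃ O', (G.cutRev O O' ∨ G.cycleRev O O') ∧
      toLex (G.disagreement A O') < toLex (G.disagreement A O) := by
  rw [not_and_or] at h
  rcases h with hcut | hcyc
  · simp only [CutMinimal, not_forall] at hcut
    obtain ⟨X, hX, hnot⟩ := hcut
    obtain ⟨m, hm, hmin⟩ := (Finset.univ.filter (G.crosses X)).exists_min_image id
      (by obtain ⟨e, he⟩ := hX.1; exact ⟨e, by simpa using he⟩)
    simp only [Finset.mem_filter, Finset.mem_univ, true_and, id] at hm hmin
    obtain ⟨b, hb⟩ := hX.exists_eq_some hm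
    have hb' : b = !A m := Bool.eq_not_iff.mpr fun h => hnot ⟨m, hm, hmin, by rw [hb, h]⟩
    have hO : O m = some (!A m) := by rw [hb, hb']
    exact ⟨_, Or.inl (cutRev_reverseOn hX), toLex_disagreement_reverseOn_lt hm hmin hO⟩
  · simp only [CycleMinimal, not_forall] at hcyc
    obtain ⟨c, hc, hnot⟩ := hcyc
    obtain ⟨s, hs, hmin⟩ := c.toFinset.exists_min_image Prod.fst
      (by obtain ⟨a, t, rfl⟩ := List.exists_cons_of_ne_nil hc.1; exact ⟨a, by simp⟩)
    rw [List.mem_toFinset] at hs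
    have hs' : s.2 = !A s.1 := Bool.eq_not_iff.mpr fun h =>
      hnot ⟨s, hs, fun t ht => hmin t (List.mem_toFinset.mpr ht), h⟩
    have hO : O s.1 = some (!A s.1) := by rw [hc.2.1 s hs, hs']
    refine ⟨_, Or.inr (cycleRev_reverseOn hc),
      toLex_disagreement_reverseOn_lt (List.mem_map_of_mem hs) ?_ hO⟩
    intro e he
    obtain ⟨t, ht, rfl⟩ := List.mem_map.mp he
    exact hmin t (List.mem_toFinset.mpr ht)

theorem exists_reflTransGen_minimal (A : G.E → Bool) (O : G.PartialOrientation) :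
    ∃ O', Relation.ReflTransGen (fun a b => G.cutRev a b ∨ G.cycleRev a b) O O' ∧
      G.CutMinimal A O' ∧ G.CycleMinimal A O' := by
  induction O using (InvImage.wf (toLex ∘ G.disagreement A) wellFounded_lt).induction with
  | _ O ih =>
  by_cases h : G.CutMinimal A O ∧ G.CycleMinimal A O
  · exact ⟨O, .refl, h⟩
  obtain ⟨O', hmove, hlt⟩ := exists_reversal_lt_of_not_minimal h
  obtain ⟨O'', hpath, hmin⟩ := ih O' hlt
  exact ⟨O'', .head hmove hpath, hmin⟩

end Minimality

end Multigraph

theorem stmt9_general (G : Multigraph) [LinearOrder G.E] (A : G.E → Bool)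
    (O : G.PartialOrientation) :
    ∃! O', Relation.ReflTransGen (fun a b => G.cutRev a b ∨ G.cycleRev a b) O O' ∧
      G.CutMinimal A O' ∧ G.CycleMinimal A O' := by
  obtain ⟨O', hO', hmin⟩ := Multigraph.exists_reflTransGen_minimal A O
  refine ⟨O', ⟨hO', hmin⟩, fun O'' ⟨hO'', hmin''⟩ => ?_⟩
  obtain ⟨r⟩ := Multigraph.Reversal.nonempty_of_reflTransGen hO'
  obtain ⟨r'⟩ := Multigraph.Reversal.nonempty_of_reflTransGen hO''
  exact (r'.symm.trans r).eq_of_minimal hmin'' hmin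

/-- every partial orientation is equivalent via directed cycle and directed
cut reversals to a unique partial orientation that is both cycle minimal and cut minimal. -/
theorem stmt9 (G : Multigraph) [LinearOrder G.E] (A : G.E → Bool) (hG : G.Connected)
    (O : G.PartialOrientation) :
    ∃! O', Relation.ReflTransGen (fun a b => G.cutRev a b ∨ G.cycleRev a b) O O' ∧
      G.CutMinimal A O' ∧ G.CycleMinimal A O' :=
  stmt9_general G A O
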